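/- arXiv:1809.11060 — 2 statements merged into one kernel-verified Lean document; each statement's English description precedes it below -/
import Mathlib

section
/- A set L of infinite sequences is dense in the metric topology induced by d if and only if L is a liveness property, i.e., every finite prefix can be extended to a sequence in L. -/
open Topology

open Classical in
noncomputable def d {C : Type*} (α β : ℕ → C) : ℝ :=
  if h : α = β then 0
  else 2 ^ (-(Nat.find (Function.ne_iff.mp h) : ℤ))


noncomputable def ballTop (C : Type*) : TopologicalSpace (ℕ → C) :=
  TopologicalSpace.generateFrom { s | ∃ α ε, 0 < ε ∧ s = {β | d α β < ε} }

lemma d_nonneg {C : Type*} (α β : ℕ → C) : 0 ≤ d α β := by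
  unfold d; split_ifs <;> positivity

lemma d_self {C : Type*} (α : ℕ → C) : d α α = 0 := by
  unfold d; simp

lemma d_lt_iff {C : Type*} (α β : ℕ → C) (N : ℕ) :
    d α β < 2 ^ (-(N:ℤ)) ↔ ∀ n ≤ N, β n = α n := by
  classical
  unfold d
  split_ifs with h
  · subst h
    constructor
    · intro _ n _; rfl
    · intro _; positivity
  · rw [zpow_lt_zpow_iff_right₀ (by norm_num : (1:ℝ) < 2), neg_lt_neg_iff]
    rw [Nat.cast_lt, Nat.lt_find_iff]
    simp [eq_comm]

lemma d_ultra {C : Type*} (α β γ : ℕ → C) : d α γ ≤ max (d α β) (d β γ) := by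
  classical
  by_cases hag : α = γ
  · rw [hag, d_self]
    exact le_max_of_le_left (d_nonneg _ _)
  by_cases hab : α = β
  · rw [hab]; exact le_max_right _ _
  by_cases hbg : β = γ
  · rw [← hbg]; exact le_max_left _ _
  unfold d
  rw [dif_neg hag, dif_neg hab, dif_neg hbg]
  set K := Nat.find (Function.ne_iff.mp hag) with hK
  set K1 := Nat.find (Function.ne_iff.mp hab) with hK1
  set K2 := Nat.find (Function.ne_iff.mp hbg) with hK2
  have hmin : min K1 K2 ≤ K := by
    by_contra hlt
    push_neg at hlt
    have h1 : α K = β K := by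
      have := Nat.find_min (Function.ne_iff.mp hab) (m := K) (lt_min_iff.mp hlt).1
      simpa using this
    have h2 : β K = γ K := by
      have := Nat.find_min (Function.ne_iff.mp hbg) (m := K) (lt_min_iff.mp hlt).2
      simpa using this
    exact Nat.find_spec (Function.ne_iff.mp hag) (h1.trans h2)
  rcases le_total K1 K2 with hc | hc
  · refine le_max_of_le_left ?_
    apply zpow_le_zpow_right₀ (by norm_num : (1:ℝ) ≤ 2)
    have : K1 ≤ K := by omega
    omega
  · refine le_max_of_le_right ?_
    apply zpow_le_zpow_right₀ (by norm_num : (1:ℝ) ≤ 2)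
    omega

theorem dense_iff_liveness {C : Type*} [Nonempty C] (L : Set (ℕ → C)) :
    @Dense _ (ballTop C) L ↔
    ∀ (α : ℕ → C) (N : ℕ), ∃ β ∈ L, ∀ n ≤ N, β n = α n := by
  letI := ballTop C
  constructor
  · intro hd α N
    have hball : IsOpen {β | d α β < 2 ^ (-(N:ℤ))} :=
      TopologicalSpace.GenerateOpen.basic _ ⟨α, _, by positivity, rfl⟩
    have hmem : α ∈ {β | d α β < 2 ^ (-(N:ℤ))} := by
      simp only [Set.mem_setOf_eq, d_self]; positivity
    obtain ⟨β, hβ⟩ := (hd.inter_open_nonempty _ hball ⟨α, hmem⟩)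
    exact ⟨β, hβ.2, (d_lt_iff α β N).mp hβ.1⟩
  · intro hL
    intro x
    rw [mem_closure_iff]
    intro U hU hxU
    -- claim: U contains a ball centered at x
    have key : ∀ U : Set (ℕ → C), TopologicalSpace.GenerateOpen
        { s | ∃ α ε, 0 < ε ∧ s = {β | d α β < ε} } U → ∀ x ∈ U,
        ∃ ε > 0, {β | d x β < ε} ⊆ U := by
      intro U hU
      induction hU with
      | basic s hs =>
        obtain ⟨α, ε, hε, rfl⟩ := hs
        intro x hx
        refine ⟨ε, hε, fun β hβ => ?_⟩
        calc d α β ≤ max (d α x) (d x β) := d_ultra _ _ _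
          _ < ε := max_lt hx hβ
      | univ => exact fun x _ => ⟨1, one_pos, fun _ _ => trivial⟩
      | inter s t _ _ ihs iht =>
        intro x hx
        obtain ⟨ε1, hε1, h1⟩ := ihs x hx.1
        obtain ⟨ε2, hε2, h2⟩ := iht x hx.2
        refine ⟨min ε1 ε2, lt_min hε1 hε2, fun β hβ => ?_⟩
        have hβ' : d x β < min ε1 ε2 := hβ
        exact ⟨h1 (show d x β < ε1 from lt_of_lt_of_le hβ' (min_le_left _ _)),
          h2 (show d x β < ε2 from lt_of_lt_of_le hβ' (min_le_right _ _))⟩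
      | sUnion S _ ih =>
        intro x hx
        obtain ⟨s, hsS, hxs⟩ := hx
        obtain ⟨ε, hε, h⟩ := ih s hsS x hxs
        exact ⟨ε, hε, fun β hβ => ⟨s, hsS, h hβ⟩⟩
    obtain ⟨ε, hε, hsub⟩ := key U hU x hxU
    obtain ⟨N, hN⟩ := exists_pow_lt_of_lt_one hε (by norm_num : (1/2:ℝ) < 1)
    have hN' : (2:ℝ) ^ (-(N:ℤ)) < ε := by
      have : (2:ℝ) ^ (-(N:ℤ)) = (1/2)^N := by
        rw [zpow_neg, zpow_natCast]
        simp [inv_pow]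
      linarith [hN, this.le]
    obtain ⟨β, hβL, hβ⟩ := hL x N
    exact ⟨β, hsub (lt_trans ((d_lt_iff x β N).mpr hβ) hN'), hβL⟩
end

section
/- (Alpern–Schneider decomposition) Every set P of infinite sequences can be written as the intersection of a closed set and a dense set in the metric topology induced by d; equivalently, every property is the intersection of a safety property and a liveness property. -/
open Topology

theorem alpern_schneider {C : Type*} [Nonempty C] (P : Set (ℕ → C)) :
    ∃ S L : Set (ℕ → C),
      IsClosed[ballTop C] S ∧ @Dense _ (ballTop C) L ∧ P = S ∩ L := by
  letI : TopologicalSpace (ℕ → C) := ballTop C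
  refine ⟨closure P, P ∪ (closure P)ᶜ, isClosed_closure, ?_, ?_⟩
  · intro x
    by_cases hx : x ∈ closure P
    · exact closure_mono Set.subset_union_left hx
    · exact subset_closure (Or.inr hx)
  · ext x
    constructor
    · intro hx
      exact ⟨subset_closure hx, Or.inl hx⟩
    · rintro ⟨hc, hx | hx⟩
      · exact hx
      · exact absurd hc hx
end
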